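/- arXiv:1802.08318 — 5 statements merged into one kernel-verified Lean document; each statement's English description precedes it below -/
import Mathlib

section
/- Let k = d and x ∈ [0,1]ⁿ with Σᵢ xᵢ = k. Let μ be the distribution on k-element subsets of [n] with μ(S) proportional to ∏_{i∈S} xᵢ. Then for any T ⊆ [n] with |T| = d−1 and R ⊆ [n] with |R| = d, Pr_{S∼μ}[T ⊆ S] / Pr_{S∼μ}[R ⊆ S] ≤ d · (∏_{i∈T} xᵢ)/(∏_{i∈R} xᵢ). -/
/-! The only `d`-set containing `R` is `R` itself, while the `d`-sets containing `T` are the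
sets `insert a T` with `a ∉ T`, of total weight `x^T · ∑_{a ∉ T} xₐ ≤ d · x^T`. The normalising
constant cancels in the ratio. -/

open Finset

section SupersetsOfCardinality

variable {α : Type*} [Fintype α] [DecidableEq α]

theorem powersetCard_univ_filter_superset_of_card_eq {R : Finset α} {d : ℕ} (hR : #R = d) :
    (powersetCard d univ).filter (R ⊆ ·) = {R} := by
  ext S
  simp only [mem_filter, mem_powersetCard_univ, mem_singleton]
  constructor
  · rintro ⟨hS, hRS⟩
    exact (eq_of_subset_of_card_le hRS (by rw [hS, hR])).symm
  · rintro rfl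
    exact ⟨hR, Subset.refl _⟩

theorem powersetCard_univ_filter_superset_of_card_add_one {T : Finset α} {d : ℕ}
    (hT : #T + 1 = d) :
    (powersetCard d univ).filter (T ⊆ ·) = Tᶜ.image (insert · T) := by
  ext S
  simp only [mem_filter, mem_powersetCard_univ, mem_image, mem_compl, ← hT]
  rw [exists_eq_insert_iff, and_comm, eq_comm]

theorem sum_powersetCard_univ_filter_superset_prod {R : Type*} [CommSemiring R]
    (x : α → R) {T : Finset α} {d : ℕ} (hT : #T + 1 = d) :
    ∑ S ∈ (powersetCard d univ).filter (T ⊆ ·), ∏ i ∈ S, x i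
      = (∑ a ∈ Tᶜ, x a) * ∏ i ∈ T, x i := by
  rw [powersetCard_univ_filter_superset_of_card_add_one hT, sum_image (insert_inj_on' T),
    sum_mul]
  exact sum_congr rfl fun a ha => prod_insert (mem_compl.mp ha)

end SupersetsOfCardinality

theorem hardcore_d_approx_independent_general {n d : ℕ} (hd : 0 < d)
    (x : Fin n → ℝ) (hx : ∀ i, 0 ≤ x i ∧ x i ≤ 1) (hsum : ∑ i, x i = d)
    (T R : Finset (Fin n)) (hT : T.card = d - 1) (hR : R.card = d)
    (hRpos : 0 < ∏ i ∈ R, x i) :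
    ((∑ S ∈ (Finset.powersetCard d (Finset.univ : Finset (Fin n))).filter
          (fun S => T ⊆ S), ∏ i ∈ S, x i) /
        (∑ S ∈ Finset.powersetCard d (Finset.univ : Finset (Fin n)), ∏ i ∈ S, x i)) /
      ((∑ S ∈ (Finset.powersetCard d (Finset.univ : Finset (Fin n))).filter
          (fun S => R ⊆ S), ∏ i ∈ S, x i) /
        (∑ S ∈ Finset.powersetCard d (Finset.univ : Finset (Fin n)), ∏ i ∈ S, x i))
      ≤ (d : ℝ) * ((∏ i ∈ T, x i) / (∏ i ∈ R, x i)) := by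
  have hxnn (i : Fin n) : 0 ≤ x i := (hx i).1
  have hpartition : 0 < ∑ S ∈ powersetCard d univ, ∏ i ∈ S, x i :=
    hRpos.trans_le <| single_le_sum (f := fun S => ∏ i ∈ S, x i)
      (fun S _ => prod_nonneg fun i _ => hxnn i) (mem_powersetCard_univ.mpr hR)
  have hTweight : ∑ S ∈ (powersetCard d univ).filter (T ⊆ ·), ∏ i ∈ S, x i
      ≤ d * ∏ i ∈ T, x i := by
    rw [sum_powersetCard_univ_filter_superset_prod x (by omega), ← hsum]
    exact mul_le_mul_of_nonneg_right (sum_le_univ_sum_of_nonneg hxnn)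
      (prod_nonneg fun i _ => hxnn i)
  rw [powersetCard_univ_filter_superset_of_card_eq hR, sum_singleton,
    div_div_div_cancel_right₀ hpartition.ne', ← mul_div_assoc]
  exact div_le_div_of_nonneg_right hTweight hRpos.le

/-- For `k = d` and `x ∈ [0,1]ⁿ` with `Σᵢ xᵢ = d`, the hard-core distribution `μ`
on `d`-element subsets of `[n]` with `μ(S) ∝ ∏_{i∈S} xᵢ` is `d`-approximate
`(d-1,d)`-wise independent: for `|T| = d-1`, `|R| = d`,
`Pr[T ⊆ S] / Pr[R ⊆ S] ≤ d · x^T / x^R`. -/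
theorem hardcore_d_approx_independent {n d : ℕ} (hd : 0 < d) (hdn : d ≤ n)
    (x : Fin n → ℝ) (hx : ∀ i, 0 ≤ x i ∧ x i ≤ 1) (hsum : ∑ i, x i = d)
    (hsupp : d ≤ ((Finset.univ : Finset (Fin n)).filter (fun i => x i ≠ 0)).card)
    (T R : Finset (Fin n)) (hT : T.card = d - 1) (hR : R.card = d)
    (hRpos : 0 < ∏ i ∈ R, x i) :
    ((∑ S ∈ (Finset.powersetCard d (Finset.univ : Finset (Fin n))).filter
          (fun S => T ⊆ S), ∏ i ∈ S, x i) /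
        (∑ S ∈ Finset.powersetCard d (Finset.univ : Finset (Fin n)), ∏ i ∈ S, x i)) /
      ((∑ S ∈ (Finset.powersetCard d (Finset.univ : Finset (Fin n))).filter
          (fun S => R ⊆ S), ∏ i ∈ S, x i) /
        (∑ S ∈ Finset.powersetCard d (Finset.univ : Finset (Fin n)), ∏ i ∈ S, x i))
      ≤ (d : ℝ) * ((∏ i ∈ T, x i) / (∏ i ∈ R, x i)) :=
  hardcore_d_approx_independent_general hd x hx hsum T R hT hR hRpos
end

section
/- Let 0 ≤ l' < l ≤ d ≤ k ≤ qk be integers and let μ be the uniform distribution on k-subsets of a ground set of size qk. For any subsets T' and T of sizes l' and l respectively, (Pr[S ⊇ T']/Pr[S ⊇ T]) · q^{l'−l} ≤ (k/(k−l+1))^{l−l'}. -/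
/-!
Both probabilities are ratios of binomial coefficients, so the quotient is
`C(qk - l', k - l') / C(qk - l, k - l)`. Raising both indices of `C(a, b)` by one multiplies it
by `(a + 1) / (b + 1)`; doing this `l - l'` times from `(a, b) = (qk - l, k - l)`, every factor
is at most `qk / (k - l + 1)`, and the `q`s cancel against `q ^ (l - l')`.
-/

open Finset

/-- The probability, under the uniform distribution on `k`-subsets of a ground set of
size `q*k`, that the sample contains a fixed subset `A`. -/
noncomputable def uniformPr (q k : ℕ) (A : Finset (Fin (q * k))) : ℝ :=
  (((Finset.powersetCard k (Finset.univ : Finset (Fin (q * k)))).filter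
      (fun S => A ⊆ S)).card : ℝ) / (Nat.choose (q * k) k : ℝ)

theorem uniformPr_eq_choose_div_choose (q k : ℕ) (A : Finset (Fin (q * k))) (hA : #A ≤ k) :
    uniformPr q k A = (Nat.choose (q * k - #A) (k - #A) : ℝ) / Nat.choose (q * k) k := by
  rw [uniformPr, card_filter_powersetCard_subset A univ k (subset_univ A) hA, card_univ,
    Fintype.card_fin]

theorem Nat.choose_add_mul_pow_le (a b m : ℕ) :
    (a + m).choose (b + m) * (b + 1) ^ m ≤ (a + m) ^ m * a.choose b := by
  induction m with
  | zero => simp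
  | succ m ih =>
    have hstep := Nat.add_one_mul_choose_eq (a + m) (b + m)
    calc (a + (m + 1)).choose (b + (m + 1)) * (b + 1) ^ (m + 1)
        = (a + m + 1).choose (b + m + 1) * (b + 1) ^ m * (b + 1) := by
          rw [pow_succ, ← mul_assoc, ← add_assoc, ← add_assoc]
      _ ≤ (a + m + 1).choose (b + m + 1) * (b + 1) ^ m * (b + m + 1) := by gcongr; omega
      _ = (a + m + 1) * ((a + m).choose (b + m) * (b + 1) ^ m) := by
          rw [mul_right_comm, ← hstep]; ring
      _ ≤ (a + m + 1) * ((a + m) ^ m * a.choose b) := Nat.mul_le_mul_left _ ih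
      _ ≤ (a + (m + 1)) ^ (m + 1) * a.choose b := by
          rw [← add_assoc, pow_succ', mul_assoc]
          exact Nat.mul_le_mul_left _ (Nat.mul_le_mul_right _ (Nat.pow_le_pow_left (by omega) m))

theorem Nat.choose_sub_div_choose_sub_le {n k j l : ℕ} (hjl : j ≤ l) (hlk : l ≤ k)
    (hkn : k ≤ n) :
    ((n - j).choose (k - j) : ℝ) / (n - l).choose (k - l) ≤
      ((n : ℝ) / (k - l + 1)) ^ (l - j) := by
  have hshift : n - j = n - l + (l - j) ∧ k - j = k - l + (l - j) := by omega
  have hcount :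
      (n - j).choose (k - j) * (k - l + 1) ^ (l - j) ≤ n ^ (l - j) * (n - l).choose (k - l) := by
    rw [hshift.1, hshift.2]
    exact (Nat.choose_add_mul_pow_le _ _ _).trans
      (Nat.mul_le_mul_right _ (Nat.pow_le_pow_left (by omega) _))
  have hb : (0 : ℝ) < (k : ℝ) - l + 1 := by
    have : (l : ℝ) ≤ k := by exact_mod_cast hlk
    linarith
  have hC : (0 : ℝ) < (n - l).choose (k - l) := by exact_mod_cast Nat.choose_pos (by omega)
  rw [div_le_iff₀ hC, div_pow, div_mul_eq_mul_div, le_div_iff₀ (by positivity)]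
  exact_mod_cast hcount

/-- For integers `0 ≤ l' < l ≤ d ≤ k` and the uniform distribution on `k`-subsets of a
ground set of size `qk`: for subsets `T'`, `T` of sizes `l'` and `l`,
`(Pr[S ⊇ T'] / Pr[S ⊇ T]) · q^{l'-l} ≤ (k/(k-l+1))^{l-l'}`. -/
theorem uniform_ratio_gen (q k d l l' : ℕ) (hq : 1 ≤ q) (hl' : l' < l) (hl : l ≤ d)
    (hdk : d ≤ k)
    (T' T : Finset (Fin (q * k))) (hT' : T'.card = l') (hT : T.card = l) :
    (uniformPr q k T' / uniformPr q k T) / (q : ℝ) ^ (l - l') ≤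
      ((k : ℝ) / ((k : ℝ) - l + 1)) ^ (l - l') := by
  have hlk : l ≤ k := hl.trans hdk
  have hk : k ≤ q * k := Nat.le_mul_of_pos_left k hq
  have hN : (0 : ℝ) < (q * k).choose k := by exact_mod_cast Nat.choose_pos hk
  have hq' : (0 : ℝ) < q := by exact_mod_cast hq
  rw [uniformPr_eq_choose_div_choose _ _ T' (by omega),
    uniformPr_eq_choose_div_choose _ _ T (by omega), hT', hT, div_div_div_cancel_right₀ hN.ne',
    div_le_iff₀ (by positivity)]
  calc _ ≤ (((q * k : ℕ) : ℝ) / (k - l + 1)) ^ (l - l') :=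
        Nat.choose_sub_div_choose_sub_le hl'.le hlk hk
    _ = _ := by push_cast; rw [mul_div_assoc, mul_pow, mul_comm]
end

section
/- Let S be the edge set of a disjoint union of d/3 triangles on vertex set [d] (3 | d), and let V_S be the d×d unsigned incidence matrix whose columns are the vectors v_e with +1 at both endpoints of e. Then V_S is invertible and tr((V_S V_Sᵀ)⁻¹) = 3d/4. -/
/-!
After relabelling the vertices by `φ`, the matrix `V` is block diagonal with `m` copies of the
incidence matrix `T` of a triangle, i.e. `V = 1 ⊗ₖ T`, so `V Vᵀ = 1 ⊗ₖ T Tᵀ`. Two distinct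
edges of a triangle share exactly one vertex, hence `T Tᵀ = 1 + J` with `J` the all-ones matrix,
whose inverse is `1 - J / 4`, of trace `9 / 4`. Summing over the blocks gives `9m/4 = 3d/4`.
-/

open Finset Matrix

open scoped Kronecker

namespace Matrix

variable {ι R : Type*} [Fintype ι]

theorem trace_submatrix_equiv {κ : Type*} [Fintype κ] [AddCommMonoid R] (A : Matrix ι ι R)
    (e : κ ≃ ι) : trace (A.submatrix e e) = trace A :=
  e.sum_comp fun i => A i i

variable [DecidableEq ι]

theorem one_kronecker_mul_transpose [CommSemiring R] {n p : Type*} [Fintype n] [Fintype p]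
    (B : Matrix n p R) :
    ((1 : Matrix ι ι R) ⊗ₖ B) * ((1 : Matrix ι ι R) ⊗ₖ B)ᵀ = (1 : Matrix ι ι R) ⊗ₖ (B * Bᵀ) := by
  rw [← kroneckerMap_transpose, transpose_one, ← mul_kronecker_mul, Matrix.one_mul]

theorem trace_inv_one_kronecker [CommRing R] {n : Type*} [Fintype n] [DecidableEq n]
    (B : Matrix n n R) :
    trace (((1 : Matrix ι ι R) ⊗ₖ B)⁻¹) = Fintype.card ι • trace B⁻¹ := by
  rw [inv_kronecker, inv_one, trace_kronecker, trace_one, nsmul_eq_mul]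

theorem inv_one_add_of_one {K : Type*} [Field K] (h : (Fintype.card ι + 1 : K) ≠ 0) :
    (1 + of 1 : Matrix ι ι K)⁻¹ = 1 - (Fintype.card ι + 1 : K)⁻¹ • of 1 := by
  have hJ : (of 1 : Matrix ι ι K) * of 1 = (Fintype.card ι : K) • of 1 := by
    ext; simp [mul_apply]
  refine inv_eq_right_inv ?_
  rw [Matrix.add_mul, Matrix.one_mul, Matrix.mul_sub, Matrix.mul_one, Matrix.mul_smul, hJ,
    smul_smul]
  ext i j
  simp [sub_apply]
  field_simp
  ring

end Matrix

def triangleIncidence : Matrix (Fin 3) (Fin 3) ℝ :=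
  of fun a b => (if a = b then 1 else 0) + (if a = b + 1 then 1 else 0)

theorem triangleIncidence_mul_transpose :
    triangleIncidence * triangleIncidenceᵀ = 1 + of 1 := by
  ext a b
  fin_cases a <;> fin_cases b <;> simp [triangleIncidence, mul_apply, Fin.sum_univ_three]

theorem det_triangleIncidence : triangleIncidence.det = 2 := by
  simp [triangleIncidence, det_fin_three]
  norm_num

theorem trace_inv_triangleIncidence_mul_transpose :
    trace ((triangleIncidence * triangleIncidenceᵀ)⁻¹) = 9 / 4 := by
  rw [triangleIncidence_mul_transpose, inv_one_add_of_one (by norm_num)]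
  simp [trace]
  norm_num

theorem of_eq_submatrix_one_kronecker_triangleIncidence {ι κ : Type*} [DecidableEq ι]
    [DecidableEq κ] (φ : ι × Fin 3 ≃ κ) :
    (of fun i c => (if i = c then (1 : ℝ) else 0) +
        (if i = φ ((φ.symm c).1, (φ.symm c).2 + 1) then 1 else 0)) =
      ((1 : Matrix ι ι ℝ) ⊗ₖ triangleIncidence).submatrix φ.symm φ.symm := by
  ext i c
  obtain ⟨⟨s, a⟩, rfl⟩ := φ.surjective i
  obtain ⟨⟨t, b⟩, rfl⟩ := φ.surjective c
  by_cases hst : s = t <;> simp [triangleIncidence, one_apply, hst]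

theorem triangles_trace_inverse_general (m : ℕ) (d : ℕ) (hd : d = 3 * m)
    (φ : Fin m × Fin 3 ≃ Fin d) (V : Matrix (Fin d) (Fin d) ℝ)
    (hV : V = Matrix.of fun i c =>
      (if i = c then (1 : ℝ) else 0) +
        (if i = φ ((φ.symm c).1, (φ.symm c).2 + 1) then 1 else 0)) :
    IsUnit V.det ∧ Matrix.trace ((V * Vᵀ)⁻¹) = 3 * (d : ℝ) / 4 := by
  rw [of_eq_submatrix_one_kronecker_triangleIncidence] at hV
  subst hV hd
  refine ⟨?_, ?_⟩
  · rw [det_submatrix_equiv_self, det_kronecker, det_one, det_triangleIncidence]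
    simp
  · rw [transpose_submatrix, submatrix_mul_equiv, one_kronecker_mul_transpose,
      inv_submatrix_equiv, trace_submatrix_equiv, trace_inv_one_kronecker,
      trace_inv_triangleIncidence_mul_transpose, Fintype.card_fin, nsmul_eq_mul]
    push_cast
    ring

/-- Let `S` be the edge set of a disjoint union of `d/3` triangles on vertex set `[d]`
(`3 ∣ d`, encoded by a bijection `φ : Fin m × Fin 3 ≃ Fin d` with `d = 3m`; the edge
indexed by a vertex `c` joins `c` to the next vertex of its triangle). Then the
unsigned incidence matrix `V` is invertible and `tr((V Vᵀ)⁻¹) = 3d/4`. -/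
theorem triangles_trace_inverse (m : ℕ) (hm : 0 < m) (d : ℕ) (hd : d = 3 * m)
    (φ : Fin m × Fin 3 ≃ Fin d) (V : Matrix (Fin d) (Fin d) ℝ)
    (hV : V = Matrix.of fun i c =>
      (if i = c then (1 : ℝ) else 0) +
        (if i = φ ((φ.symm c).1, (φ.symm c).2 + 1) then 1 else 0)) :
    IsUnit V.det ∧ Matrix.trace ((V * Vᵀ)⁻¹) = 3 * (d : ℝ) / 4 :=
  triangles_trace_inverse_general m d hd φ V hV
end

section
/- Let G = ([d], S) with |S| = d have invertible incidence matrix V_S, and suppose t of its connected components are triangles. Then tr((V_S V_Sᵀ)⁻¹) ≥ d − 3t/4. -/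
/-!
Let `w_e` be the row of `V_S⁻¹` indexed by the edge `e = ab`, so that `w_e p + w_e q` is `1` on
`e` and `0` on every other edge `pq`; then `tr((V_S V_Sᵀ)⁻¹) = ∑ₑ ‖w_e‖²`, and off `e` the
function `|w_e|` is constant along edges.

If `e` is a bridge, let `χ` be the indicator of the side of `b`: then `V_Sᵀ` kills
`(χ - w_e b) • w_e`, which is therefore zero, so `w_e a * w_e b = 0` and
`‖w_e‖² ≥ (w_e a)² + (w_e b)² = (w_e a + w_e b)² = 1`.
Otherwise `|w_e|` is constant on the whole component of `e`, and at least `1/2` because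
`w_e a + w_e b = 1`; so `‖w_e‖²` is at least a quarter of the size of the component, which is
`≥ 1` unless the component is a triangle. Summing over the edges, each of the `t` triangle
components has three edges and costs `3/4` in total.
-/

open Finset Matrix

namespace SimpleGraph

variable {V : Type*} {G : SimpleGraph V}

theorem Reachable.apply_eq_of_forall_adj {β : Type*} {g : V → β}
    (hg : ∀ p q, G.Adj p q → g p = g q) {x y : V} (h : G.Reachable x y) : g x = g y := by
  rw [reachable_iff_reflTransGen] at h
  induction h with
  | refl => rfl
  | tail _ hadj ih => exact ih.trans (hg _ _ hadj)

theorem Reachable.exists_adj_ne {a b : V} (h : G.Reachable a b) (hab : a ≠ b)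
    (hadj : ¬ G.Adj a b) : ∃ c, c ≠ b ∧ G.Adj a c := by
  obtain ⟨p⟩ := h
  have hp : ¬ p.Nil := p.not_nil_of_ne hab
  exact ⟨p.snd, fun h => hadj (h ▸ p.adj_snd hp), p.adj_snd hp⟩

end SimpleGraph

theorem Matrix.trace_inv_mul_transpose_eq_sum_sq {m n : Type*} [Fintype m] [Fintype n]
    [DecidableEq m] (V : Matrix m n ℝ) (h : IsUnit (V * Vᵀ).det) :
    trace (V * Vᵀ)⁻¹ = ∑ j, ∑ i, ((Vᵀ * (V * Vᵀ)⁻¹) j i) ^ 2 := by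
  set B := Vᵀ * (V * Vᵀ)⁻¹
  have hB : Bᵀ * B = (V * Vᵀ)⁻¹ := by
    rw [transpose_mul, transpose_nonsing_inv, transpose_mul, transpose_transpose,
      Matrix.mul_assoc, ← Matrix.mul_assoc V, mul_nonsing_inv _ h, Matrix.mul_one]
  rw [← hB, trace, Finset.sum_comm]
  simp only [diag_apply, mul_apply, transpose_apply, sq]

theorem Finset.natCard_subtype_eq_card_filter {α : Type*} (S : Finset α) (P : α → Prop)
    [DecidablePred P] : Nat.card {e : S // P e} = #{e ∈ S | P e} := by
  rw [← Nat.card_eq_finsetCard]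
  exact Nat.card_congr <| (Equiv.subtypeSubtypeEquivSubtypeInter (· ∈ S) P).trans
    (Equiv.subtypeEquivRight fun e => by rw [mem_filter])

namespace SignlessIncidence

open SimpleGraph

variable {α : Type*} [DecidableEq α]

abbrev edgeGraph (S : Finset (Sym2 α)) : SimpleGraph α := fromEdgeSet S

def incidence (S : Finset (Sym2 α)) : Matrix α S ℝ := of fun i e => if i ∈ e.1 then 1 else 0

/-- `(incidence S)ᵀ w` is the indicator of `e`; its solution is the row of `(incidence S)⁻¹`
indexed by `e` (the vector `u_e` of the paper). -/
def EdgeSumsIndicator (S : Finset (Sym2 α)) (e : Sym2 α) (w : α → ℝ) : Prop :=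
  ∀ p q, s(p, q) ∈ S → w p + w q = if s(p, q) = e then 1 else 0

def IsTriangleComponent (S : Finset (Sym2 α)) (c : (edgeGraph S).ConnectedComponent) : Prop :=
  Nat.card {v : α // (edgeGraph S).connectedComponentMk v = c} = 3 ∧
  Nat.card {e : {e // e ∈ S} // ∀ u ∈ e.1, (edgeGraph S).connectedComponentMk u = c} = 3

def IsTriangleEdge (S : Finset (Sym2 α)) (e : Sym2 α) : Prop :=
  ∃ c, IsTriangleComponent S c ∧ ∀ u ∈ e, (edgeGraph S).connectedComponentMk u = c

theorem EdgeSumsIndicator.abs_eq {S : Finset (Sym2 α)} {e : Sym2 α} {w : α → ℝ}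
    (hw : EdgeSumsIndicator S e w) {p q : α} (h : s(p, q) ∈ S) (hne : s(p, q) ≠ e) :
    |w p| = |w q| := by
  have hsum := hw p q h
  rw [if_neg hne] at hsum
  rw [eq_neg_of_add_eq_zero_left hsum, abs_neg]

theorem filter_mem_sym2_eq_triangle {S : Finset (Sym2 α)} (hdiag : ∀ e ∈ S, ¬ e.IsDiag)
    {a b c : α} (h₁ : s(a, b) ∈ S) (h₂ : s(a, c) ∈ S) (h₃ : s(b, c) ∈ S) :
    {e ∈ S | e ∈ ({a, b, c} : Finset α).sym2} = {s(a, b), s(a, c), s(b, c)} := by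
  ext e
  induction e using Sym2.ind with
  | h p q =>
    simp only [mem_filter, mk_mem_sym2_iff, mem_insert, mem_singleton]
    constructor
    · rintro ⟨he, hp, hq⟩
      have hpq : p ≠ q := fun h => hdiag _ he (by simp [h])
      rcases hp with rfl | rfl | rfl <;> rcases hq with rfl | rfl | rfl <;>
        simp_all [Sym2.eq_swap]
    · rintro (h | h | h) <;> obtain ⟨rfl, rfl⟩ | ⟨rfl, rfl⟩ := Sym2.eq_iff.mp h <;> simp [*]

theorem card_triangle_edges {a b c : α} (hab : a ≠ b) (hac : a ≠ c) (hbc : b ≠ c) :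
    #{s(a, b), s(a, c), s(b, c)} = 3 := by
  rw [card_insert_of_notMem (by simp [hab, hac, hbc]), card_pair (by simp [hab, hbc.symm])]

section

variable [Fintype α] {S : Finset (Sym2 α)} {a b : α} {w : α → ℝ}

theorem vecMul_incidence (z : α → ℝ) {p q : α} (hpq : p ≠ q) (h : s(p, q) ∈ S) :
    (z ᵥ* incidence S) ⟨s(p, q), h⟩ = z p + z q := by
  have hpair : univ.filter (· ∈ s(p, q)) = {p, q} := by ext; simp [Sym2.mem_iff]
  simp only [vecMul, dotProduct, incidence, of_apply, mul_ite, mul_one, mul_zero]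
  rw [← sum_filter, hpair, sum_pair hpq]

theorem eq_zero_of_forall_add_eq_zero (hdiag : ∀ e ∈ S, ¬ e.IsDiag) {B : Matrix S α ℝ}
    (hVB : incidence S * B = 1) (z : α → ℝ) (hz : ∀ p q, s(p, q) ∈ S → z p + z q = 0) :
    z = 0 := by
  have h0 : z ᵥ* incidence S = 0 := by
    funext ⟨e, he⟩
    induction e using Sym2.ind with
    | h p q => exact (vecMul_incidence z (fun h => hdiag _ he (by simp [h])) he).trans (hz p q he)
  rw [← vecMul_one z, ← hVB, ← vecMul_vecMul, h0, zero_vecMul]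

theorem edgeSumsIndicator_of_mul_eq_one (hdiag : ∀ e ∈ S, ¬ e.IsDiag) {B : Matrix S α ℝ}
    (hBV : B * incidence S = 1) (e : S) : EdgeSumsIndicator S e (B e) := by
  intro p q h
  rw [← vecMul_incidence _ (fun hpq => hdiag _ h (by simp [hpq])) h]
  change (B * incidence S) e ⟨s(p, q), h⟩ = _
  simp [hBV, one_apply, Subtype.ext_iff, eq_comm]

theorem one_le_sum_sq_of_not_reachable (hab : a ≠ b) (he : s(a, b) ∈ S)
    (hw : EdgeSumsIndicator S s(a, b) w)
    (hker : ∀ z : α → ℝ, (∀ p q, s(p, q) ∈ S → z p + z q = 0) → z = 0)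
    (hbridge : ¬ (edgeGraph (S.erase s(a, b))).Reachable b a) : 1 ≤ ∑ i, w i ^ 2 := by
  classical
  have hsum : w a + w b = 1 := by simpa using hw a b he
  let χ : α → ℝ := fun x => if (edgeGraph (S.erase s(a, b))).Reachable b x then 1 else 0
  -- `χ` takes the same value at both ends of every edge except `e`, where the terms cancel.
  have hz : (fun x => (χ x - w b) * w x) = 0 := by
    refine hker _ fun p q hpq => ?_
    by_cases hpe : s(p, q) = s(a, b)
    · obtain ⟨hp, hq⟩ | ⟨hp, hq⟩ := Sym2.eq_iff.mp hpe <;> rw [hp, hq] <;>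
        simp only [χ, if_neg hbridge, if_pos (Reachable.refl _)] <;>
        linear_combination (-(w b)) * hsum
    · have hχ : χ p = χ q := by
        by_cases hpq' : p = q
        · rw [hpq']
        · have hadj : (edgeGraph (S.erase s(a, b))).Adj p q := by simp [hpe, hpq, hpq']
          have hiff : (edgeGraph (S.erase s(a, b))).Reachable b p ↔
              (edgeGraph (S.erase s(a, b))).Reachable b q :=
            ⟨fun h => h.trans hadj.reachable, fun h => h.trans hadj.symm.reachable⟩
          simp only [χ, hiff]
      have hpq0 := hw p q hpq
      rw [if_neg hpe] at hpq0
      rw [hχ]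
      linear_combination (χ q - w b) * hpq0
  have hprod : w a * w b = 0 := by
    have ha := congrFun hz a
    simp only [χ, if_neg hbridge, Pi.zero_apply] at ha
    linear_combination -ha
  calc (1 : ℝ) = ∑ i ∈ {a, b}, w i ^ 2 := by
        rw [sum_pair hab]; linear_combination (-(w a + w b + 1)) * hsum + 2 * hprod
    _ ≤ ∑ i, w i ^ 2 := sum_le_sum_of_subset_of_nonneg (subset_univ _) fun i _ _ => sq_nonneg _

theorem card_div_four_le_sum_sq_of_reachable (he : s(a, b) ∈ S)
    (hw : EdgeSumsIndicator S s(a, b) w) (hcyc : (edgeGraph (S.erase s(a, b))).Reachable a b) :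
    (Nat.card {x // (edgeGraph S).connectedComponentMk x = (edgeGraph S).connectedComponentMk a} :
      ℝ) / 4 ≤ ∑ i, w i ^ 2 := by
  classical
  have habs : |w a| = |w b| := hcyc.apply_eq_of_forall_adj fun p q hpq => by
    simp only [edgeGraph, fromEdgeSet_adj, coe_erase, Set.mem_sdiff, mem_coe,
      Set.mem_singleton_iff] at hpq
    exact hw.abs_eq hpq.1.1 hpq.1.2
  have hcomp : ∀ x, (edgeGraph S).Reachable x a → |w x| = |w a| :=
    fun x hx => hx.apply_eq_of_forall_adj (g := fun x => |w x|) fun p q hpq => by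
      simp only [edgeGraph, fromEdgeSet_adj, mem_coe] at hpq
      by_cases hpe : s(p, q) = s(a, b)
      · obtain ⟨rfl, rfl⟩ | ⟨rfl, rfl⟩ := Sym2.eq_iff.mp hpe
        exacts [habs, habs.symm]
      · exact hw.abs_eq hpq.1 hpe
  have hhalf : 1 / 2 ≤ |w a| := by
    have := hw a b he
    rw [if_pos rfl] at this
    linarith [le_abs_self (w a), le_abs_self (w b)]
  calc (Nat.card {x // (edgeGraph S).connectedComponentMk x =
          (edgeGraph S).connectedComponentMk a} : ℝ) / 4
      = ∑ x ∈ univ.filter fun x => (edgeGraph S).Reachable x a, (1 / 2 : ℝ) ^ 2 := by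
        simp only [ConnectedComponent.eq, Nat.card_eq_fintype_card, Fintype.card_subtype,
          sum_const, nsmul_eq_mul]
        ring
    _ ≤ ∑ x ∈ univ.filter fun x => (edgeGraph S).Reachable x a, w x ^ 2 := by
        refine sum_le_sum fun x hx => ?_
        rw [← sq_abs (w x), hcomp x (mem_filter.mp hx).2]
        gcongr
    _ ≤ ∑ i, w i ^ 2 := sum_le_sum_of_subset_of_nonneg (subset_univ _) fun i _ _ => sq_nonneg _

theorem isTriangleComponent_of_card_le_three (hdiag : ∀ e ∈ S, ¬ e.IsDiag) (hab : a ≠ b)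
    (he : s(a, b) ∈ S) (hcyc : (edgeGraph (S.erase s(a, b))).Reachable a b)
    (h3 : Nat.card {x // (edgeGraph S).connectedComponentMk x =
      (edgeGraph S).connectedComponentMk a} ≤ 3) :
    IsTriangleComponent S ((edgeGraph S).connectedComponentMk a) := by
  classical
  -- A walk from `a` to `b` avoiding `e` leaves `a` towards some `c` and enters `b` from some `c'`;
  -- a component of three vertices forces `c = c'`.
  obtain ⟨c, hcb, hac⟩ := hcyc.exists_adj_ne hab (by simp)
  obtain ⟨c', hc'a, hbc'⟩ := hcyc.symm.exists_adj_ne hab.symm (by simp [Sym2.eq_swap])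
  simp only [edgeGraph, fromEdgeSet_adj, coe_erase, Set.mem_sdiff, mem_coe,
    Set.mem_singleton_iff] at hac hbc'
  set K := univ.filter fun x => (edgeGraph S).connectedComponentMk x =
    (edgeGraph S).connectedComponentMk a
  have hcardK : Nat.card {x // (edgeGraph S).connectedComponentMk x =
      (edgeGraph S).connectedComponentMk a} = #K := by
    rw [Nat.card_eq_fintype_card, Fintype.card_subtype]
  have hbK : b ∈ K := by
    simpa [K] using (show (edgeGraph S).Adj a b by simp [he, hab]).reachable.symm
  have hcK : c ∈ K := by
    simpa [K] using (show (edgeGraph S).Adj a c by simp [hac.1.1, hac.2]).reachable.symm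
  have hK : K = {a, b, c} := by
    refine (eq_of_subset_of_card_le ?_ ?_).symm
    · exact insert_subset_iff.mpr ⟨by simp [K], insert_subset_iff.mpr ⟨hbK, by simpa using hcK⟩⟩
    · rw [← hcardK, card_eq_three.mpr ⟨a, b, c, hab, hac.2, hcb.symm, rfl⟩]; exact h3
  have hc' : c' = c := by
    have hc'K : c' ∈ K := by
      simpa [K] using (show (edgeGraph S).Adj b c' by simp [hbc'.1.1, hbc'.2]).reachable.symm.trans
        (by simpa [K] using hbK)
    simp only [hK, mem_insert, mem_singleton] at hc'K
    tauto
  subst hc'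
  refine ⟨by rw [hcardK, hK, card_eq_three.mpr ⟨a, b, c', hab, hac.2, hcb.symm, rfl⟩], ?_⟩
  rw [natCard_subtype_eq_card_filter S
    (fun e => ∀ u ∈ e, (edgeGraph S).connectedComponentMk u = (edgeGraph S).connectedComponentMk a),
    filter_congr (q := (· ∈ K.sym2)) fun e _ => by simp [mem_sym2_iff, K], hK,
    filter_mem_sym2_eq_triangle hdiag he hac.1.1 hbc'.1.1, card_triangle_edges hab hac.2 hcb.symm]

theorem le_sum_sq_of_edgeSumsIndicator (hdiag : ∀ e ∈ S, ¬ e.IsDiag)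
    (hker : ∀ z : α → ℝ, (∀ p q, s(p, q) ∈ S → z p + z q = 0) → z = 0) {e : Sym2 α}
    (he : e ∈ S) (hw : EdgeSumsIndicator S e w) [Decidable (IsTriangleEdge S e)] :
    (if IsTriangleEdge S e then (3 / 4 : ℝ) else 1) ≤ ∑ i, w i ^ 2 := by
  obtain ⟨⟨a, b⟩, rfl⟩ := Quot.exists_rep e
  have hab : a ≠ b := fun h => hdiag _ he (by simp [h])
  have hite : (if IsTriangleEdge S s(a, b) then (3 / 4 : ℝ) else 1) ≤ 1 := by
    split_ifs <;> norm_num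
  by_cases hcyc : (edgeGraph (S.erase s(a, b))).Reachable a b
  · have hcard := card_div_four_le_sum_sq_of_reachable he hw hcyc
    by_cases h3 : Nat.card {x // (edgeGraph S).connectedComponentMk x =
      (edgeGraph S).connectedComponentMk a} ≤ 3
    · have htri := isTriangleComponent_of_card_le_three hdiag hab he hcyc h3
      have hedge : IsTriangleEdge S s(a, b) := ⟨_, htri, by
        simpa using ((show (edgeGraph S).Adj a b by simp [he, hab]).reachable.symm)⟩
      rw [htri.1] at hcard
      rw [if_pos hedge]
      exact le_of_eq_of_le (by norm_num) hcard
    · refine hite.trans (le_trans ?_ hcard)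
      rw [le_div_iff₀ (by norm_num)]
      exact_mod_cast (not_le.mp h3)
  · exact hite.trans (one_le_sum_sq_of_not_reachable hab he hw hker fun h => hcyc h.symm)

theorem card_filter_isTriangleEdge (S : Finset (Sym2 α)) [DecidablePred (IsTriangleEdge S)] :
    #{e ∈ S | IsTriangleEdge S e} = 3 * Nat.card {c // IsTriangleComponent S c} := by
  classical
  have hunion : {e ∈ S | IsTriangleEdge S e} = (univ.filter (IsTriangleComponent S)).biUnion
      fun c => {e ∈ S | ∀ u ∈ e, (edgeGraph S).connectedComponentMk u = c} := by
    ext e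
    rw [mem_filter, mem_biUnion]
    simp only [mem_filter, mem_univ, true_and, IsTriangleEdge]
    tauto
  have hdisj : (univ.filter (IsTriangleComponent S) : Set _).PairwiseDisjoint
      fun c => {e ∈ S | ∀ u ∈ e, (edgeGraph S).connectedComponentMk u = c} := by
    intro c _ c' _ hne
    refine disjoint_filter.mpr fun e _ h h' => hne ?_
    exact (h _ e.out_fst_mem).symm.trans (h' _ e.out_fst_mem)
  have hfib : ∀ c ∈ univ.filter (IsTriangleComponent S),
      #{e ∈ S | ∀ u ∈ e, (edgeGraph S).connectedComponentMk u = c} = 3 := fun c hc =>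
    (natCard_subtype_eq_card_filter S
      fun e => ∀ u ∈ e, (edgeGraph S).connectedComponentMk u = c).symm.trans (mem_filter.mp hc).2.2
  rw [hunion, card_biUnion hdisj, sum_congr rfl hfib, sum_const, smul_eq_mul, mul_comm,
    Nat.card_eq_fintype_card, Fintype.card_subtype]

theorem sum_ite_isTriangleEdge (S : Finset (Sym2 α)) [DecidablePred (IsTriangleEdge S)] :
    ∑ e : S, (if IsTriangleEdge S e then (3 / 4 : ℝ) else 1) =
      #S - 3 * Nat.card {c // IsTriangleComponent S c} / 4 := by
  rw [sum_coe_sort S fun e => if IsTriangleEdge S e then (3 / 4 : ℝ) else 1, sum_ite, sum_const,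
    sum_const, nsmul_eq_mul, nsmul_eq_mul,
    ← card_filter_add_card_filter_not (s := S) (IsTriangleEdge S)]
  push_cast [card_filter_isTriangleEdge]
  ring

end

end SignlessIncidence

open SignlessIncidence in
/-- Let `G = ([d], S)` with `|S| = d` have invertible unsigned incidence matrix `V_S`,
and suppose `t` of its connected components are triangles (components with 3 vertices
and 3 edges). Then `tr((V_S V_Sᵀ)⁻¹) ≥ d - 3t/4`. -/
theorem trace_inverse_lower_bound (d t : ℕ) (S : Finset (Sym2 (Fin d)))
    (hcard : S.card = d) (hdiag : ∀ e ∈ S, ¬ e.IsDiag)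
    (VS : Matrix (Fin d) {e // e ∈ S} ℝ)
    (hVS : VS = Matrix.of fun i e => if i ∈ (e.1 : Sym2 (Fin d)) then (1 : ℝ) else 0)
    (hdet : IsUnit (VS * VSᵀ).det)
    (ht : t = Nat.card {c : (SimpleGraph.fromEdgeSet (↑S : Set (Sym2 (Fin d)))).ConnectedComponent //
      Nat.card {v : Fin d //
        (SimpleGraph.fromEdgeSet (↑S : Set (Sym2 (Fin d)))).connectedComponentMk v = c} = 3 ∧
      Nat.card {e : {e // e ∈ S} // ∀ u ∈ (e.1 : Sym2 (Fin d)),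
        (SimpleGraph.fromEdgeSet (↑S : Set (Sym2 (Fin d)))).connectedComponentMk u = c} = 3}) :
    (d : ℝ) - 3 * (t : ℝ) / 4 ≤ Matrix.trace ((VS * VSᵀ)⁻¹) := by
  classical
  obtain rfl : VS = incidence S := hVS
  obtain rfl : t = Nat.card {c // IsTriangleComponent S c} := ht
  set B := (incidence S)ᵀ * (incidence S * (incidence S)ᵀ)⁻¹
  have hVB : incidence S * B = 1 := by rw [← Matrix.mul_assoc]; exact mul_nonsing_inv _ hdet
  have hBV : B * incidence S = 1 :=
    (mul_eq_one_comm_of_equiv (Fintype.equivOfCardEq (by simp [hcard]))).mp hVB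
  rw [trace_inv_mul_transpose_eq_sum_sq _ hdet]
  calc (d : ℝ) - 3 * Nat.card {c // IsTriangleComponent S c} / 4
      = ∑ e : S, if IsTriangleEdge S e then (3 / 4 : ℝ) else 1 := by
        rw [sum_ite_isTriangleEdge, hcard]
    _ ≤ ∑ e : S, ∑ i, B e i ^ 2 := sum_le_sum fun e _ =>
        le_sum_sq_of_edgeSumsIndicator hdiag (eq_zero_of_forall_add_eq_zero hdiag hVB) e.2
          (edgeSumsIndicator_of_mul_eq_one hdiag hBV e)
end

section
/- For the A-optimal design instance in ℝ^d with vectors v₁ = … = v_{d−1} = N·eᵢ (i = 1,…,d−1) and v_d = e_d, each repeatable, as N → ∞ the ratio of the optimal integral value over k chosen vectors (with repetition) to the optimal fractional value tends to k/(k−d+1); in particular, for fixed N the integral optimum equals (d−1)/N + 1/(k−d+1) when one copy of each N·eᵢ and k−d+1 copies of e_d are chosen, and this choice is optimal among integral solutions. -/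
/-! Every vector of the instance is a multiple of a coordinate vector, so the information matrix is
diagonal and, writing `m = d - 1`, the objective is `∑_{i < d} 1 / (N yᵢ) + 1 / y_d`.
Over real designs this is minimised by the equality case of Sedrakyan's inequality, with value
`(m / √N + 1)² / k → 1 / k`. An integral design other than the canonical one has `y_d < k - m`,
so its objective is at least `1 / (k - m - 1)`, which is at least `m / N + 1 / (k - m)` as soon as
`N > m k²`. Hence the integral optimum is `m / N + 1 / (k - m) → 1 / (k - m)`. -/

open Finset Matrix Filter

/-- The `i`-th vector of the integrality-gap instance: `√N·eᵢ` for `i < d-1`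
(so that `vᵢvᵢᵀ = N·eᵢeᵢᵀ`, the `N·eᵢ` scaling convention), and `e_{d}` for the
last index. -/
noncomputable def gapVec (d : ℕ) (N : ℝ) (i : Fin d) : Fin d → ℝ :=
  if (i : ℕ) < d - 1 then (fun j => if j = i then Real.sqrt N else 0)
  else fun j => if j = i then 1 else 0

/-- The information matrix `Σᵢ yᵢ vᵢvᵢᵀ` of the instance. -/
noncomputable def gapMat (d : ℕ) (N : ℝ) (y : Fin d → ℝ) : Matrix (Fin d) (Fin d) ℝ :=
  ∑ i : Fin d, y i • Matrix.vecMulVec (gapVec d N i) (gapVec d N i)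

/-- The optimal integral value over `k` chosen vectors with repetition. -/
noncomputable def gapIntOpt (d k : ℕ) (N : ℝ) : ℝ :=
  sInf {r : ℝ | ∃ y : Fin d → ℕ, (∀ i, 1 ≤ y i) ∧ (∑ i, y i) = k ∧
    r = Matrix.trace ((gapMat d N (fun i => (y i : ℝ)))⁻¹)}

/-- The optimal fractional value. -/
noncomputable def gapFracOpt (d k : ℕ) (N : ℝ) : ℝ :=
  sInf {r : ℝ | ∃ x : Fin d → ℝ, (∀ i, 0 < x i) ∧ (∑ i, x i) = k ∧
    r = Matrix.trace ((gapMat d N x)⁻¹)}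

lemma trace_inv_diagonal {n K : Type*} [Fintype n] [DecidableEq n] [Field K] {v : n → K}
    (hv : ∀ i, v i ≠ 0) : trace (diagonal v)⁻¹ = ∑ i, (v i)⁻¹ := by
  rw [inv_eq_left_inv (B := diagonal fun i => (v i)⁻¹), trace_diagonal]
  rw [diagonal_mul_diagonal, ← diagonal_one]
  exact congrArg diagonal (funext fun i => inv_mul_cancel₀ (hv i))

theorem isLeast_sum_sq_div {ι : Type*} [Fintype ι] [Nonempty ι] {a : ι → ℝ}
    (ha : ∀ i, 0 < a i) {k : ℝ} (hk : 0 < k) :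
    IsLeast {r | ∃ x : ι → ℝ, (∀ i, 0 < x i) ∧ ∑ i, x i = k ∧ r = ∑ i, a i ^ 2 / x i}
      ((∑ i, a i) ^ 2 / k) := by
  have hS : 0 < ∑ i, a i := Finset.sum_pos (fun i _ => ha i) univ_nonempty
  refine ⟨⟨fun i => k * a i / ∑ j, a j, fun i => by have := ha i; positivity, ?_, ?_⟩, ?_⟩
  · rw [← Finset.sum_div, ← Finset.mul_sum, mul_div_cancel_right₀ _ hS.ne']
  · have : ∀ i, a i ^ 2 / (k * a i / ∑ j, a j) = a i * (∑ j, a j) / k := fun i => by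
      have := (ha i).ne'; field_simp
    rw [Finset.sum_congr rfl fun i _ => this i, ← Finset.sum_div, ← Finset.sum_mul, sq]
  · rintro r ⟨x, hx, hxk, rfl⟩
    simpa [hxk] using Finset.sq_sum_div_le_sum_sq_div univ a fun i _ => hx i

lemma div_add_inv_le_inv_sub_one {m N a : ℝ} (hN : 0 < N) (ha : 1 < a)
    (h : m * (a * (a - 1)) ≤ N) : m / N + a⁻¹ ≤ (a - 1)⁻¹ := by
  have hm : m / N ≤ (a * (a - 1))⁻¹ := by
    rw [div_le_iff₀ hN, inv_mul_eq_div, le_div_iff₀ (by nlinarith)]; linarith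
  have : (a * (a - 1))⁻¹ + a⁻¹ = (a - 1)⁻¹ := by
    have : a - 1 ≠ 0 := by linarith
    field_simp; ring
  linarith

def gapWeight (d : ℕ) (N : ℝ) (i : Fin d) : ℝ := if (i : ℕ) < d - 1 then N else 1

lemma gapWeight_pos (d : ℕ) {N : ℝ} (hN : 0 < N) (i : Fin d) : 0 < gapWeight d N i := by
  unfold gapWeight; split_ifs <;> positivity

@[simp] lemma gapWeight_castSucc (m : ℕ) (N : ℝ) (i : Fin m) :
    gapWeight (m + 1) N i.castSucc = N := by
  simp [gapWeight]

@[simp] lemma gapWeight_last (m : ℕ) (N : ℝ) : gapWeight (m + 1) N (Fin.last m) = 1 := by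
  simp [gapWeight]

lemma gapVec_apply (d : ℕ) (N : ℝ) (i j : Fin d) :
    gapVec d N i j = if j = i then Real.sqrt (gapWeight d N i) else 0 := by
  unfold gapVec gapWeight; split_ifs <;> simp_all

lemma gapMat_eq_diagonal (d : ℕ) {N : ℝ} (hN : 0 ≤ N) (y : Fin d → ℝ) :
    gapMat d N y = diagonal fun i => y i * gapWeight d N i := by
  have hw : ∀ i, 0 ≤ gapWeight d N i := fun i => by unfold gapWeight; split_ifs <;> positivity
  ext j l
  rw [gapMat, Matrix.sum_apply, Finset.sum_eq_single j
    (fun i _ hij => by simp [vecMulVec_apply, gapVec_apply, hij.symm]) (by simp)]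
  by_cases hjl : j = l
  · subst hjl; simp [vecMulVec_apply, gapVec_apply, Real.mul_self_sqrt (hw j)]
  · simp [vecMulVec_apply, gapVec_apply, hjl, Ne.symm hjl]

lemma trace_inv_gapMat (d : ℕ) {N : ℝ} (hN : 0 < N) {y : Fin d → ℝ} (hy : ∀ i, y i ≠ 0) :
    trace (gapMat d N y)⁻¹ = ∑ i, (y i * gapWeight d N i)⁻¹ := by
  rw [gapMat_eq_diagonal d hN.le, trace_inv_diagonal]
  exact fun i => mul_ne_zero (hy i) (gapWeight_pos d hN i).ne'

lemma trace_inv_gapMat_succ (m : ℕ) {N : ℝ} (hN : 0 < N) {y : Fin (m + 1) → ℝ}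
    (hy : ∀ i, y i ≠ 0) :
    trace (gapMat (m + 1) N y)⁻¹
      = ∑ i : Fin m, (y i.castSucc * N)⁻¹ + (y (Fin.last m))⁻¹ := by
  rw [trace_inv_gapMat _ hN hy, Fin.sum_univ_castSucc]
  simp

lemma gapFracOpt_eq (m : ℕ) {k : ℕ} (hk : 0 < k) {N : ℝ} (hN : 0 < N) :
    gapFracOpt (m + 1) k N = (m * (Real.sqrt N)⁻¹ + 1) ^ 2 / k := by
  have hw := gapWeight_pos (m + 1) hN
  have key := isLeast_sum_sq_div (a := fun i => (Real.sqrt (gapWeight (m + 1) N i))⁻¹)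
    (fun i => by have := hw i; positivity) (Nat.cast_pos.2 hk)
  have hsum : ∑ i, (Real.sqrt (gapWeight (m + 1) N i))⁻¹ = m * (Real.sqrt N)⁻¹ + 1 := by
    simp [Fin.sum_univ_castSucc]
  rw [hsum] at key
  rw [gapFracOpt, ← key.csInf_eq]
  congr 1; ext r
  refine exists_congr fun x => and_congr_right fun hx => and_congr_right fun _ => ?_
  rw [trace_inv_gapMat _ hN fun i => (hx i).ne']
  refine Eq.congr_right (Finset.sum_congr rfl fun i _ => ?_)
  rw [inv_pow, Real.sq_sqrt (hw i).le, mul_inv, div_eq_mul_inv, mul_comm]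

def canonicalDesign (m k : ℕ) (i : Fin (m + 1)) : ℕ := if (i : ℕ) < m then 1 else k - m

@[simp] lemma canonicalDesign_castSucc (m k : ℕ) (i : Fin m) :
    canonicalDesign m k i.castSucc = 1 := by
  simp [canonicalDesign]

@[simp] lemma canonicalDesign_last (m k : ℕ) : canonicalDesign m k (Fin.last m) = k - m := by
  simp [canonicalDesign]

lemma sum_canonicalDesign {m k : ℕ} (hk : m ≤ k) : ∑ i, canonicalDesign m k i = k := by
  simp [Fin.sum_univ_castSucc]; omega

lemma trace_inv_gapMat_canonicalDesign {m k : ℕ} (hk : m < k) {N : ℝ} (hN : 0 < N) :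
    trace (gapMat (m + 1) N fun i => (canonicalDesign m k i : ℝ))⁻¹
      = m / N + ((k : ℝ) - m)⁻¹ := by
  rw [trace_inv_gapMat_succ m hN fun i => ?_]
  · simp [Nat.cast_sub hk.le, div_eq_mul_inv]
  · have : 0 < canonicalDesign m k i := by unfold canonicalDesign; split_ifs <;> omega
    positivity

lemma eq_canonicalDesign_or_last_lt {m k : ℕ} {y : Fin (m + 1) → ℕ} (hy : ∀ i, 1 ≤ y i)
    (hyk : ∑ i, y i = k) : y = canonicalDesign m k ∨ y (Fin.last m) < k - m := by
  rw [Fin.sum_univ_castSucc] at hyk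
  have hm : ∑ i : Fin m, 1 ≤ ∑ i : Fin m, y i.castSucc := Finset.sum_le_sum fun i _ => hy _
  simp only [sum_const, card_univ, Fintype.card_fin, smul_eq_mul, mul_one] at hm
  refine (lt_or_ge (y (Fin.last m)) (k - m)).symm.imp (fun hlast => ?_) id
  -- the first `m` entries are each at least `1` and sum to at most `m`
  have hone : ∀ i : Fin m, 1 = y i.castSucc := by
    have := (Finset.sum_eq_sum_iff_of_le (s := univ) (f := fun _ => 1)
      fun (i : Fin m) _ => hy i.castSucc).1 (by simp; omega)
    exact fun i => this i (mem_univ i)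
  funext i
  induction i using Fin.lastCases with
  | last => simp; omega
  | cast i => simp [← hone i]

lemma isLeast_trace_inv_gapMat_canonicalDesign {m k : ℕ} (hk : m < k) {N : ℝ}
    (hN : m * k * k < N) :
    IsLeast {r | ∃ y : Fin (m + 1) → ℕ, (∀ i, 1 ≤ y i) ∧ ∑ i, y i = k ∧
        r = trace (gapMat (m + 1) N fun i => (y i : ℝ))⁻¹} (m / N + ((k : ℝ) - m)⁻¹) := by
  have hN0 : 0 < N := lt_of_le_of_lt (by positivity) hN
  refine ⟨⟨canonicalDesign m k, fun i => ?_, sum_canonicalDesign hk.le,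
    (trace_inv_gapMat_canonicalDesign hk hN0).symm⟩, ?_⟩
  · unfold canonicalDesign; split_ifs <;> omega
  rintro r ⟨y, hy, hyk, rfl⟩
  obtain rfl | hlast := eq_canonicalDesign_or_last_lt hy hyk
  · exact (trace_inv_gapMat_canonicalDesign hk hN0).ge
  have hy0 : ∀ i, (y i : ℝ) ≠ 0 := fun i => by have := hy i; positivity
  have hlast' : (y (Fin.last m) : ℝ) ≤ (k - m : ℝ) - 1 := by
    have : y (Fin.last m) + 1 + m ≤ k := by omega
    have : (y (Fin.last m) : ℝ) + 1 + m ≤ k := by exact_mod_cast this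
    linarith
  have hy1 : (1 : ℝ) ≤ y (Fin.last m) := by exact_mod_cast hy _
  calc m / N + ((k : ℝ) - m)⁻¹ ≤ ((k - m : ℝ) - 1)⁻¹ := by
        refine div_add_inv_le_inv_sub_one hN0 (by linarith) ?_
        calc (m : ℝ) * ((k - m) * (k - m - 1)) ≤ m * k * k := by
              rw [mul_assoc]; gcongr <;> linarith
          _ ≤ N := hN.le
    _ ≤ (y (Fin.last m) : ℝ)⁻¹ := inv_anti₀ (by positivity) hlast'
    _ ≤ trace (gapMat (m + 1) N fun i => (y i : ℝ))⁻¹ := by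
        rw [trace_inv_gapMat_succ m hN0 hy0]
        exact le_add_of_nonneg_left (Finset.sum_nonneg fun i _ => by positivity)

lemma tendsto_gap_ratio {m k : ℕ} (hk : m < k) :
    Tendsto (fun N : ℝ => (m / N + ((k : ℝ) - m)⁻¹) / ((m * (Real.sqrt N)⁻¹ + 1) ^ 2 / k))
      atTop (nhds ((k : ℝ) / (k - m))) := by
  have hk0 : (k : ℝ) ≠ 0 := by exact_mod_cast (Nat.zero_lt_of_lt hk).ne'
  have hinv : Tendsto (fun N : ℝ => (m : ℝ) / N) atTop (nhds 0) :=
    tendsto_const_nhds.div_atTop tendsto_id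
  have hsqrt : Tendsto (fun N : ℝ => (Real.sqrt N)⁻¹) atTop (nhds 0) :=
    tendsto_inv_atTop_zero.comp Real.tendsto_sqrt_atTop
  have := (hinv.add_const ((k : ℝ) - m)⁻¹).div
    (((hsqrt.const_mul (m : ℝ)).add_const 1).pow 2 |>.div_const (k : ℝ)) (by simpa using hk0)
  rwa [show (0 + ((k : ℝ) - m)⁻¹) / ((m * 0 + 1) ^ 2 / k) = k / (k - m) by simp; ring] at this

/-- For the A-optimal design instance with vectors `N·e₁,…,N·e_{d-1}, e_d` (each
repeatable): as `N → ∞` the ratio of the optimal integral value over `k` chosen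
vectors (with repetition) to the optimal fractional value tends to `k/(k-d+1)`;
for fixed `N` the choice of one copy of each `N·eᵢ` and `k-d+1` copies of `e_d` has
objective `(d-1)/N + 1/(k-d+1)`, and (for all large enough `N`) this choice is
optimal among integral solutions. -/
theorem integrality_gap_A_optimal (d k : ℕ) (hd : 1 ≤ d) (hdk : d ≤ k) :
    Tendsto (fun N : ℝ => gapIntOpt d k N / gapFracOpt d k N) atTop
        (nhds ((k : ℝ) / ((k : ℝ) - d + 1))) ∧
      (∀ N : ℝ, 0 < N →
        Matrix.trace ((gapMat d N
            (fun i => if (i : ℕ) < d - 1 then (1 : ℝ) else ((k - d + 1 : ℕ) : ℝ)))⁻¹)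
          = ((d : ℝ) - 1) / N + 1 / ((k : ℝ) - d + 1)) ∧
      (∃ N₀ : ℝ, ∀ N : ℝ, N₀ ≤ N →
        ∀ y : Fin d → ℕ, (∀ i, 1 ≤ y i) → (∑ i, y i) = k →
          Matrix.trace ((gapMat d N
              (fun i => if (i : ℕ) < d - 1 then (1 : ℝ) else ((k - d + 1 : ℕ) : ℝ)))⁻¹)
            ≤ Matrix.trace ((gapMat d N (fun i => (y i : ℝ)))⁻¹)) := by
  obtain ⟨m, rfl⟩ : ∃ m, d = m + 1 := ⟨d - 1, by omega⟩
  have hk : m < k := hdk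
  have hcanon : (fun i : Fin (m + 1) =>
      if (i : ℕ) < m + 1 - 1 then (1 : ℝ) else ((k - (m + 1) + 1 : ℕ) : ℝ)) =
      fun i => (canonicalDesign m k i : ℝ) := by
    funext i
    rw [canonicalDesign, Nat.add_sub_cancel, show k - (m + 1) + 1 = k - m by omega]
    split_ifs <;> simp
  have hval : (k : ℝ) - (m + 1 : ℕ) + 1 = k - m := by push_cast; ring
  rw [hcanon, hval]
  refine ⟨?_, fun N hN => ?_, ⟨m * k * k + 1, fun N hN y hy hyk => ?_⟩⟩
  · refine (tendsto_gap_ratio hk).congr' ?_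
    filter_upwards [eventually_gt_atTop ((m : ℝ) * k * k)] with N hN
    rw [gapIntOpt, (isLeast_trace_inv_gapMat_canonicalDesign hk hN).csInf_eq,
      gapFracOpt_eq m (Nat.zero_lt_of_lt hk) (lt_of_le_of_lt (by positivity) hN)]
  · rw [trace_inv_gapMat_canonicalDesign hk hN]
    push_cast; ring
  · have hN' : (m : ℝ) * k * k < N := by linarith
    rw [trace_inv_gapMat_canonicalDesign hk (lt_of_le_of_lt (by positivity) hN')]
    exact (isLeast_trace_inv_gapMat_canonicalDesign hk hN').2 ⟨y, hy, hyk, rfl⟩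
end
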